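/- In the instance D′(φ): if the 3-CNF formula φ is satisfiable, then the data exchange x⁰ is not core-stable; i.e., there exist a nonempty set U of agents and an exchange x^U over U with u_i(x^U) > u_i(x⁰) for every i ∈ U. -/

import Mathlib

/-!
Given a satisfying assignment `f`, let `S` consist of all selection and clause vertices and the
literal vertices made true by `f`, and let every member of `S` share `1` along each arc inside
`S`. A selection or literal vertex then shares at most one unit and a clause vertex at most
three (the negation of a literal satisfied by `f` lies outside `S`), so nobody pays a cost.
Every member of `S` receives at least one unit, and a literal agent its full in-degree, which
beats the `1 - ε`, respectively `d_ℓ - ε`, that it gets from `g` in `x⁰`.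
-/

open scoped BigOperators
open Classical

namespace DataExchangeSAT

noncomputable section

/-- A data exchange on an arbitrary agent type: entries in `[0,1]`, zero diagonal. -/
def IsExch {A : Type*} (x : A → A → ℝ) : Prop :=
  (∀ a b, 0 ≤ x a b ∧ x a b ≤ 1) ∧ ∀ a, x a a = 0

/-- An exchange over the coalition `U`: zero outside `U × U`. -/
def IsExchOver {A : Type*} (U : Set A) (x : A → A → ℝ) : Prop :=
  IsExch x ∧ ∀ a b, (a ∉ U ∨ b ∉ U) → x a b = 0

/-- Core stability with respect to a utility function `u`. -/
def CoreStable {A : Type*} (u : (A → A → ℝ) → A → ℝ) (x : A → A → ℝ) : Prop :=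
  ¬ ∃ (U : Set A) (y : A → A → ℝ), U.Nonempty ∧ IsExchOver U y ∧ ∀ a ∈ U, u x a < u y a

/-- The vertices of the directed graph built from a 3-CNF formula with `N` variables and
`M` clauses: selection vertices `s_1, …, s_{N+1}` (`sel k` is `s_{k+1}`), literal vertices
(`lit i true` is `v_{i+1}` and `lit i false` is `v̄_{i+1}`), and clause vertices
(`cls j` is `C_{j+1}`). -/
inductive Vtx (N M : ℕ) where
  | sel : Fin (N + 1) → Vtx N M
  | lit : Fin N → Bool → Vtx N M
  | cls : Fin M → Vtx N M
deriving DecidableEq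

instance (N M : ℕ) : Fintype (Vtx N M) := by
  classical
  exact Fintype.ofInjective
    (fun v : Vtx N M => match v with
      | .sel k => (Sum.inl k : Fin (N+1) ⊕ ((Fin N × Bool) ⊕ Fin M))
      | .lit i b => Sum.inr (Sum.inl (i, b))
      | .cls j => Sum.inr (Sum.inr j))
    (by intro a b hab; cases a <;> cases b <;> simp_all)

/-- The agents of the instance `D′(φ)`: `none` is the generous agent `g`, and `some v` is
the normal agent corresponding to the vertex `v`. -/
abbrev Agent (N M : ℕ) := Option (Vtx N M)

variable {N M : ℕ}

/-- The arcs of the directed graph built from the 3-CNF formula whose `j`-th clause has the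
three literals `litf j 0, litf j 1, litf j 2` (a literal is a variable together with a
polarity): `v_i → s_i` and `v̄_i → s_i`; `s_{i+1} → v_i` and `s_{i+1} → v̄_i`; the path
`s_1 → C_M → C_{M-1} → ⋯ → C_1 → s_{N+1}`; and an arc from each clause to the negation of
each literal it contains. -/
def arc (litf : Fin M → Fin 3 → Fin N × Bool) : Vtx N M → Vtx N M → Prop
  | .lit i _, .sel k => k = Fin.castSucc i
  | .sel k, .lit i _ => k = Fin.succ i
  | .sel k, .cls j => k = 0 ∧ (j : ℕ) = M - 1
  | .cls j, .cls j' => (j : ℕ) = (j' : ℕ) + 1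
  | .cls j, .sel k => (j : ℕ) = 0 ∧ k = Fin.last N
  | .cls j, .lit i b => ∃ t, litf j t = (i, !b)
  | _, _ => False

/-- The in-degree of a vertex in the directed graph. -/
def inDeg (litf : Fin M → Fin 3 → Fin N × Bool) (v : Vtx N M) : ℕ :=
  (Finset.univ.filter (fun w => arc litf w v)).card

/-- The payoff of the normal agent `a`: the payoff from the generous agent plus the sum of
the shares received along incoming arcs. -/
def payoff (ε : ℝ) (litf : Fin M → Fin 3 → Fin N × Bool)
    (x : Agent N M → Agent N M → ℝ) (a : Vtx N M) : ℝ :=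
  (match a with
    | .lit i b => ((inDeg litf (Vtx.lit i b) : ℝ) - ε) * x none (some (Vtx.lit i b))
    | _ => (1 - ε) * x none (some a))
  + ∑ w ∈ Finset.univ.filter (fun w => arc litf w a), x (some w) (some a)

/-- The threshold `τ`: `3` for clause agents, `1` for selection and literal agents. -/
def τ : Vtx N M → ℝ
  | .cls _ => 3
  | _ => 1

/-- The cost of the normal agent `a`: `(1/μ)·max(Σ_j x_{a,j} − τ_a, 0)`. -/
def cost (μ : ℝ) (x : Agent N M → Agent N M → ℝ) (a : Vtx N M) : ℝ :=
  (1 / μ) * max ((∑ b : Agent N M, x (some a) b) - τ a) 0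

/-- The utility function of the instance `D′(φ)`: the generous agent always has utility `0`,
and a normal agent's utility is payoff minus cost. -/
def util (ε μ : ℝ) (litf : Fin M → Fin 3 → Fin N × Bool)
    (x : Agent N M → Agent N M → ℝ) : Agent N M → ℝ
  | none => 0
  | some a => payoff ε litf x a - cost μ x a

/-- The data exchange `x⁰`: the generous agent shares everything with every normal agent;
all other shares are `0`. -/
def x0 : Agent N M → Agent N M → ℝ :=
  fun a b => if a = none ∧ b ≠ none then 1 else 0

/-- Satisfiability of the 3-CNF formula whose clauses are given by `litf`. -/
def Satisfiable (litf : Fin M → Fin 3 → Fin N × Bool) : Prop :=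
  ∃ f : Fin N → Bool, ∀ j : Fin M, ∃ t : Fin 3, f (litf j t).1 = (litf j t).2

def arcExchange (litf : Fin M → Fin 3 → Fin N × Bool) (S : Set (Vtx N M)) :
    Agent N M → Agent N M → ℝ
  | some v, some w => if arc litf v w ∧ v ∈ S ∧ w ∈ S then 1 else 0
  | _, _ => 0

def outDegWithin (litf : Fin M → Fin 3 → Fin N × Bool) (S : Set (Vtx N M)) (v : Vtx N M) :
    ℕ :=
  (Finset.univ.filter fun w => arc litf v w ∧ w ∈ S).card

section ArcExchange

variable {litf : Fin M → Fin 3 → Fin N × Bool} {S : Set (Vtx N M)}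

lemma arc_irrefl (v : Vtx N M) : ¬ arc litf v v := by
  cases v <;> simp [arc]

lemma arcExchange_isExchOver : IsExchOver (some '' S) (arcExchange litf S) := by
  refine ⟨⟨fun a b => ?_, fun a => ?_⟩, fun a b hab => ?_⟩
  · rcases a with _ | v <;> rcases b with _ | w <;> simp only [arcExchange] <;>
      (try split_ifs) <;> norm_num
  · rcases a with _ | v
    · rfl
    · simp [arcExchange, arc_irrefl]
  · rcases a with _ | v <;> rcases b with _ | w <;> simp_all [arcExchange]
    tauto

lemma sum_arcExchange_out {v : Vtx N M} (hv : v ∈ S) :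
    ∑ b : Agent N M, arcExchange litf S (some v) b =
      (outDegWithin litf S v : ℝ) := by
  rw [Fintype.sum_option, outDegWithin, ← Finset.sum_boole]
  simp [arcExchange, hv]

lemma payoff_arcExchange (ε : ℝ) (v : Vtx N M) :
    payoff ε litf (arcExchange litf S) v =
      ∑ w ∈ Finset.univ.filter (fun w => arc litf w v),
        arcExchange litf S (some w) (some v) := by
  cases v <;> simp [payoff, arcExchange]

lemma cost_arcExchange_eq_zero (μ : ℝ) {v : Vtx N M} (hv : v ∈ S)
    (hout : (outDegWithin litf S v : ℝ) ≤ τ v) :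
    cost μ (arcExchange litf S) v = 0 := by
  rw [cost, sum_arcExchange_out hv, max_eq_right (by linarith), mul_zero]

lemma one_le_payoff_arcExchange (ε : ℝ) {v w : Vtx N M} (hv : v ∈ S) (hw : w ∈ S)
    (hwv : arc litf w v) : 1 ≤ payoff ε litf (arcExchange litf S) v := by
  rw [payoff_arcExchange]
  calc (1 : ℝ) = arcExchange litf S (some w) (some v) := by simp [arcExchange, hwv, hv, hw]
    _ ≤ _ := Finset.single_le_sum (f := fun w => arcExchange litf S (some w) (some v))
        (fun u _ => by simp only [arcExchange]; split_ifs <;> norm_num) (by simpa using hwv)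

lemma payoff_arcExchange_eq_inDeg (ε : ℝ) {v : Vtx N M} (hv : v ∈ S)
    (hin : ∀ w, arc litf w v → w ∈ S) :
    payoff ε litf (arcExchange litf S) v = inDeg litf v := by
  rw [payoff_arcExchange, inDeg, Finset.cast_card]
  exact Finset.sum_congr rfl fun w hw => by
    have hwv : arc litf w v := (Finset.mem_filter.1 hw).2
    simp [arcExchange, hwv, hv, hin w hwv]

end ArcExchange

lemma util_x0_sel (ε μ : ℝ) (litf : Fin M → Fin 3 → Fin N × Bool) (k : Fin (N + 1)) :
    util ε μ litf x0 (some (Vtx.sel k)) = 1 - ε := by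
  simp [util, payoff, cost, x0, τ]

lemma util_x0_cls (ε μ : ℝ) (litf : Fin M → Fin 3 → Fin N × Bool) (j : Fin M) :
    util ε μ litf x0 (some (Vtx.cls j)) = 1 - ε := by
  simp [util, payoff, cost, x0, τ]

lemma util_x0_lit (ε μ : ℝ) (litf : Fin M → Fin 3 → Fin N × Bool) (i : Fin N) (b : Bool) :
    util ε μ litf x0 (some (Vtx.lit i b)) = inDeg litf (Vtx.lit i b) - ε := by
  simp [util, payoff, cost, x0, τ]

structure IsBlockingSet (litf : Fin M → Fin 3 → Fin N × Bool) (S : Set (Vtx N M)) : Prop where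
  nonempty : S.Nonempty
  outDegWithin_le : ∀ v ∈ S, (outDegWithin litf S v : ℝ) ≤ τ v
  exists_arc_into : ∀ v ∈ S, ∃ w ∈ S, arc litf w v
  arc_into_lit_mem : ∀ i b, Vtx.lit i b ∈ S → ∀ w, arc litf w (Vtx.lit i b) → w ∈ S

theorem IsBlockingSet.not_coreStable_x0 {litf : Fin M → Fin 3 → Fin N × Bool}
    {S : Set (Vtx N M)} (hS : IsBlockingSet litf S) {ε : ℝ} (hε : 0 < ε) (μ : ℝ) :
    ¬ CoreStable (util ε μ litf) x0 := by
  refine not_not.2 ⟨some '' S, arcExchange litf S, hS.nonempty.image _,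
    arcExchange_isExchOver, ?_⟩
  rintro _ ⟨v, hv, rfl⟩
  have hcost := cost_arcExchange_eq_zero μ hv (hS.outDegWithin_le v hv)
  have hpay : 1 ≤ payoff ε litf (arcExchange litf S) v := by
    obtain ⟨w, hw, hwv⟩ := hS.exists_arc_into v hv
    exact one_le_payoff_arcExchange ε hv hw hwv
  change _ < payoff ε litf (arcExchange litf S) v - cost μ (arcExchange litf S) v
  cases v with
  | sel k => rw [util_x0_sel]; linarith
  | cls j => rw [util_x0_cls]; linarith
  | lit i b =>
    rw [util_x0_lit, payoff_arcExchange_eq_inDeg ε hv (hS.arc_into_lit_mem i b hv)]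
    linarith

def assignmentVertices (f : Fin N → Bool) : Set (Vtx N M) :=
  {v | match v with
    | .lit i b => b = f i
    | _ => True}

section Assignment

variable {litf : Fin M → Fin 3 → Fin N × Bool} {f : Fin N → Bool}

lemma outDegWithin_assignmentVertices_sel_le (k : Fin (N + 1)) :
    outDegWithin litf (assignmentVertices f) (Vtx.sel k) ≤ 1 := by
  refine Finset.card_le_one.2 fun a ha c hc => ?_
  simp only [Finset.mem_filter, Finset.mem_univ, true_and] at ha hc
  cases a <;> cases c <;> simp_all [arc, assignmentVertices]
  · exact (Fin.succ_ne_zero _ hc.1.symm).elim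
  · exact Fin.ext (by omega)

lemma outDegWithin_assignmentVertices_lit_le (i : Fin N) (b : Bool) :
    outDegWithin litf (assignmentVertices f) (Vtx.lit i b) ≤ 1 := by
  refine Finset.card_le_one.2 fun a ha c hc => ?_
  simp only [Finset.mem_filter, Finset.mem_univ, true_and] at ha hc
  cases a <;> cases c <;> simp_all [arc]

lemma outDegWithin_assignmentVertices_cls_le {j : Fin M} {t₀ : Fin 3}
    (ht₀ : f (litf j t₀).1 = (litf j t₀).2) :
    outDegWithin litf (assignmentVertices f) (Vtx.cls j) ≤ 3 := by
  -- besides the next vertex on the clause path, the only out-neighbours in the coalition are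
  -- negations of literals falsified by `f`, so not the one indexed by `t₀`
  set next : Vtx N M :=
    if h : (j : ℕ) = 0 then Vtx.sel (Fin.last N) else Vtx.cls ⟨j - 1, by omega⟩
  have hsub :
      (Finset.univ.filter fun w => arc litf (Vtx.cls j) w ∧ w ∈ assignmentVertices f) ⊆
      insert next ((Finset.univ.erase t₀).image fun t => Vtx.lit (litf j t).1 !(litf j t).2) := by
    intro w hw
    simp only [Finset.mem_filter, Finset.mem_univ, true_and] at hw
    obtain ⟨hjw, hwS⟩ := hw
    cases w with
    | sel k =>
      obtain ⟨hj, rfl⟩ := hjw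
      simp [next, hj]
    | cls j' =>
      have hj : (j : ℕ) = j' + 1 := hjw
      have hj' : j' = ⟨j - 1, by omega⟩ := Fin.ext (by simp; omega)
      simp [next, show (j : ℕ) ≠ 0 by omega, hj']
    | lit i b =>
      obtain ⟨t, ht⟩ := hjw
      have hb : b = f i := hwS
      refine Finset.mem_insert_of_mem
        (Finset.mem_image.2 ⟨t, Finset.mem_erase.2 ⟨?_, Finset.mem_univ _⟩, ?_⟩)
      · rintro rfl
        simp [ht, hb] at ht₀
      · simp [ht]
  calc _ ≤ _ := Finset.card_le_card hsub
    _ ≤ ((Finset.univ.erase t₀).image fun t => Vtx.lit (litf j t).1 !(litf j t).2).card + 1 :=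
        Finset.card_insert_le _ _
    _ ≤ (Finset.univ.erase t₀).card + 1 := Nat.add_le_add_right Finset.card_image_le 1
    _ = 3 := by simp

lemma exists_arc_into_assignmentVertices (hM : 0 < M) (v : Vtx N M) :
    ∃ w ∈ assignmentVertices f, arc litf w v := by
  cases v with
  | sel k =>
    by_cases hk : (k : ℕ) < N
    · exact ⟨Vtx.lit ⟨k, hk⟩ (f ⟨k, hk⟩), rfl, Fin.ext rfl⟩
    · exact ⟨Vtx.cls ⟨0, hM⟩, trivial, rfl, Fin.ext (by simp; omega)⟩
  | lit i b => exact ⟨Vtx.sel i.succ, trivial, rfl⟩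
  | cls j =>
    by_cases hj : (j : ℕ) + 1 < M
    · exact ⟨Vtx.cls ⟨j + 1, hj⟩, trivial, rfl⟩
    · exact ⟨Vtx.sel 0, trivial, rfl, by omega⟩

lemma isBlockingSet_assignmentVertices (hM : 0 < M)
    (hf : ∀ j, ∃ t, f (litf j t).1 = (litf j t).2) :
    IsBlockingSet litf (assignmentVertices f) where
  nonempty := ⟨Vtx.sel 0, trivial⟩
  outDegWithin_le v _ := by
    cases v with
    | sel k => simp only [τ]; exact_mod_cast outDegWithin_assignmentVertices_sel_le k
    | lit i b => simp only [τ]; exact_mod_cast outDegWithin_assignmentVertices_lit_le i b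
    | cls j =>
      obtain ⟨t₀, ht₀⟩ := hf j
      simp only [τ]
      exact_mod_cast outDegWithin_assignmentVertices_cls_le ht₀
  exists_arc_into v _ := exists_arc_into_assignmentVertices hM v
  arc_into_lit_mem i b _ w hw := by
    cases w with
    | lit => exact hw.elim
    | _ => trivial

end Assignment

theorem satisfiable_implies_x0_not_core_stable_general
    (N M : ℕ) (hM : 0 < M) (litf : Fin M → Fin 3 → Fin N × Bool)
    (ε μ : ℝ) (hε0 : 0 < ε)
    (hsat : Satisfiable litf) :
    ¬ CoreStable (util ε μ litf) (x0 (N := N) (M := M)) := by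
  obtain ⟨f, hf⟩ := hsat
  exact (isBlockingSet_assignmentVertices hM hf).not_coreStable_x0 hε0 μ

/-- In the instance `D′(φ)`, if the 3-CNF formula `φ` is satisfiable, then
the data exchange `x⁰` is not core-stable. -/
theorem satisfiable_implies_x0_not_core_stable
    (N M : ℕ) (hM : 0 < M) (litf : Fin M → Fin 3 → Fin N × Bool)
    (ε μ : ℝ) (hε0 : 0 < ε) (hε1 : ε < 1/4) (hμ0 : 0 < μ) (hμ1 : μ < 1 - 4 * ε)
    (hsat : Satisfiable litf) :
    ¬ CoreStable (util ε μ litf) (x0 (N := N) (M := M)) :=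
  satisfiable_implies_x0_not_core_stable_general N M hM litf ε μ hε0 hsat

end
end DataExchangeSAT
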